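/- Under the cube monomial relations, one has the conjugation identity b₄·(a₂b₄ + (c₁c₃)⁻¹)·b₄⁻¹ = b₄a₂ + (c₂c₄)⁻¹. Consequently the equation a₂b₄ + (c₁c₃)⁻¹ = 1 holds if and only if the equation b₄a₂ + (c₂c₄)⁻¹ = 1 holds. -/

import Mathlib

/-!
The four relations at the vertices carrying `b`-edges give `(c₁c₃)⁻¹ = b₃b₂b₁b₄` and
`(c₂c₄)⁻¹ = b₄b₃b₂b₁`. Hence with `x = a₂ + b₃b₂b₁` the two sides are `x b₄` and `b₄ x`,
which are conjugate by `b₄`; and an element is `1` iff one of its conjugates is.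
-/

section DivisionRing

variable {R : Type*} [DivisionRing R]

theorem inv_eq_neg_of_mul_eq_neg_one {x c : R} (h : x * c = -1) : c⁻¹ = -x :=
  inv_eq_of_mul_eq_one_left (by rw [neg_mul, h, neg_neg])

theorem mul_inv_eq_of_mul_eq_neg_one {x y c d : R} (hc : x * c = -1) (hd : y * d = -1) :
    (c * d)⁻¹ = y * x := by
  rw [mul_inv_rev, inv_eq_neg_of_mul_eq_neg_one hc, inv_eq_neg_of_mul_eq_neg_one hd,
    neg_mul_neg]

end DivisionRing

theorem conj_eq_one_iff₀ {G₀ : Type*} [GroupWithZero G₀] {b z : G₀} (hb : b ≠ 0) :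
    b * z * b⁻¹ = 1 ↔ z = 1 := by
  rw [mul_inv_eq_one₀ hb, mul_eq_left₀ hb]

theorem statement_3_general {R : Type*} [DivisionRing R]
    (a₂ b₁ b₂ b₃ b₄ c₁ c₂ c₃ c₄ : R)
    (hb₄ : b₄ ≠ 0)
    (h2 : b₂ * b₁ * c₂ = -1)
    (h4 : b₄ * b₃ * c₄ = -1)
    (h5 : b₁ * b₄ * c₁ = -1)
    (h7 : b₃ * b₂ * c₃ = -1) :
    b₄ * (a₂ * b₄ + (c₁ * c₃)⁻¹) * b₄⁻¹ = b₄ * a₂ + (c₂ * c₄)⁻¹ ∧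
      (a₂ * b₄ + (c₁ * c₃)⁻¹ = 1 ↔ b₄ * a₂ + (c₂ * c₄)⁻¹ = 1) := by
  have left_eq : a₂ * b₄ + (c₁ * c₃)⁻¹ = (a₂ + b₃ * b₂ * b₁) * b₄ := by
    rw [mul_inv_eq_of_mul_eq_neg_one h5 h7]
    noncomm_ring
  have right_eq : b₄ * a₂ + (c₂ * c₄)⁻¹ = b₄ * (a₂ + b₃ * b₂ * b₁) := by
    rw [mul_inv_eq_of_mul_eq_neg_one h2 h4]
    noncomm_ring
  have conj : b₄ * (a₂ * b₄ + (c₁ * c₃)⁻¹) * b₄⁻¹ = b₄ * a₂ + (c₂ * c₄)⁻¹ := by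
    rw [left_eq, right_eq, ← mul_assoc, mul_inv_cancel_right₀ hb₄]
  exact ⟨conj, by rw [← conj, conj_eq_one_iff₀ hb₄]⟩

/-- Under the cube monomial relations, one has the conjugation
identity `b₄·(a₂b₄ + (c₁c₃)⁻¹)·b₄⁻¹ = b₄a₂ + (c₂c₄)⁻¹`; consequently
`a₂b₄ + (c₁c₃)⁻¹ = 1` iff `b₄a₂ + (c₂c₄)⁻¹ = 1`. -/
theorem statement_3 {R : Type*} [DivisionRing R]
    (a₁ a₂ a₃ a₄ b₁ b₂ b₃ b₄ c₁ c₂ c₃ c₄ : R)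
    (ha₁ : a₁ ≠ 0) (ha₂ : a₂ ≠ 0) (ha₃ : a₃ ≠ 0) (ha₄ : a₄ ≠ 0)
    (hb₁ : b₁ ≠ 0) (hb₂ : b₂ ≠ 0) (hb₃ : b₃ ≠ 0) (hb₄ : b₄ ≠ 0)
    (hc₁ : c₁ ≠ 0) (hc₂ : c₂ ≠ 0) (hc₃ : c₃ ≠ 0) (hc₄ : c₄ ≠ 0)
    (h1 : a₄ * a₁ * c₁ = -1) (h2 : b₂ * b₁ * c₂ = -1)
    (h3 : a₂ * a₃ * c₃ = -1) (h4 : b₄ * b₃ * c₄ = -1)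
    (h5 : b₁ * b₄ * c₁ = -1) (h6 : a₁ * a₂ * c₂ = -1)
    (h7 : b₃ * b₂ * c₃ = -1) (h8 : a₃ * a₄ * c₄ = -1) :
    b₄ * (a₂ * b₄ + (c₁ * c₃)⁻¹) * b₄⁻¹ = b₄ * a₂ + (c₂ * c₄)⁻¹ ∧
      (a₂ * b₄ + (c₁ * c₃)⁻¹ = 1 ↔ b₄ * a₂ + (c₂ * c₄)⁻¹ = 1) :=
  statement_3_general a₂ b₁ b₂ b₃ b₄ c₁ c₂ c₃ c₄ hb₄ h2 h4 h5 h7
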